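/- For every λ ∈ (−1,1) and every x ∈ ℝ, the function F is differentiable at x with derivative F'(x) = 2·(1 − λ·cos(πx))/(1 − 2λ·cos(πx) + λ²), and F'(x) > 1. In particular F is a strictly increasing diffeomorphism of ℝ with derivative bounded below by a constant greater than 1. -/

import Mathlib

/-!
With `c = cos (π x)` and `s = sin (π x)`, the quotient rule and `s² + c² = 1` give
`F' = 2 (1 - λc) / D` with `D = 1 - 2λc + λ² = (1 - λc)² + (λs)² > 0`,
and `|λc| ≤ |λ| < 1` gives the uniform bound `F' ≥ 2 / (1 + |λ|) > 1`, attained where `λc = -|λ|`.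
Since `F(x) - (2x + 1) = (2/π) arctan(…)` is bounded, the strictly increasing continuous map `F`
is onto.
-/

open Real Filter Function

lemma abs_arctan_lt_pi_div_two (y : ℝ) : |arctan y| < π / 2 :=
  abs_lt.2 ⟨neg_pi_div_two_lt_arctan y, arctan_lt_pi_div_two y⟩

lemma Continuous.surjective_of_abs_sub_affine_le {f : ℝ → ℝ} (hf : Continuous f) {a b C : ℝ}
    (ha : 0 < a) (h : ∀ x, |f x - (a * x + b)| ≤ C) : Surjective f := by
  have hlin : Tendsto (fun x => a * x) atTop atTop := tendsto_id.const_mul_atTop ha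
  have hlin' : Tendsto (fun x => a * x) atBot atBot := tendsto_id.const_mul_atBot ha
  refine hf.surjective ?_ ?_
  · refine tendsto_atTop_mono (fun x => ?_) (tendsto_atTop_add_const_right _ (b - C) hlin)
    linarith [(abs_le.1 (h x)).1]
  · refine tendsto_atBot_mono (fun x => ?_) (tendsto_atBot_add_const_right _ (b + C) hlin')
    linarith [(abs_le.1 (h x)).2]

section

variable {lam : ℝ}

lemma abs_mul_cos_le (lam t : ℝ) : |lam * cos t| ≤ |lam| := by
  rw [abs_mul]
  exact mul_le_of_le_one_right (abs_nonneg _) (abs_cos_le_one t)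

lemma one_sub_mul_cos_pos (hlam : |lam| < 1) (t : ℝ) : 0 < 1 - lam * cos t := by
  linarith [le_abs_self (lam * cos t), abs_mul_cos_le lam t]

lemma one_sub_two_mul_cos_add_sq_eq (lam t : ℝ) :
    1 - 2 * lam * cos t + lam ^ 2 = (1 - lam * cos t) ^ 2 + (lam * sin t) ^ 2 := by
  linear_combination lam ^ 2 * (sin_sq_add_cos_sq t).symm

lemma one_sub_two_mul_cos_add_sq_pos (hlam : |lam| < 1) (t : ℝ) :
    0 < 1 - 2 * lam * cos t + lam ^ 2 := by
  rw [one_sub_two_mul_cos_add_sq_eq]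
  have := one_sub_mul_cos_pos hlam t
  positivity

lemma hasDerivAt_arctan_mul_sin_div {t : ℝ} (h : 1 - lam * cos t ≠ 0) :
    HasDerivAt (fun s => arctan (lam * sin s / (1 - lam * cos s)))
      ((lam * cos t - lam ^ 2) / (1 - 2 * lam * cos t + lam ^ 2)) t := by
  have hquot := (((hasDerivAt_sin t).const_mul lam).div
    (((hasDerivAt_cos t).const_mul lam).const_sub 1) h).arctan
  refine hquot.congr_deriv ?_
  simp only [Pi.div_apply]
  rw [one_sub_two_mul_cos_add_sq_eq]
  field_simp
  linear_combination (-lam ^ 2) * sin_sq_add_cos_sq t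

lemma two_div_one_add_abs_le (hlam : |lam| < 1) (t : ℝ) :
    2 / (1 + |lam|) ≤ 2 * (1 - lam * cos t) / (1 - 2 * lam * cos t + lam ^ 2) := by
  have hD := one_sub_two_mul_cos_add_sq_pos hlam t
  have hlc : -|lam| ≤ lam * cos t := by linarith [neg_abs_le (lam * cos t), abs_mul_cos_le lam t]
  rw [div_le_div_iff₀ (by positivity) hD]
  -- the difference of the two sides is `2 (1 - |λ|) (|λ| + λ cos t) ≥ 0`
  nlinarith [mul_nonneg (sub_nonneg.2 hlam.le) (neg_le_iff_add_nonneg.1 hlc), sq_abs lam]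

lemma one_lt_two_div_one_add_abs (hlam : |lam| < 1) : 1 < 2 / (1 + |lam|) := by
  rw [one_lt_div (by positivity)]
  linarith

end

noncomputable def liftMap (lam x : ℝ) : ℝ :=
  2 * x + 1 + (2 / π) * arctan (lam * sin (π * x) / (1 - lam * cos (π * x)))

namespace liftMap

variable {lam : ℝ}

lemma hasDerivAt (hlam : |lam| < 1) (x : ℝ) :
    HasDerivAt (liftMap lam)
      (2 * (1 - lam * cos (π * x)) / (1 - 2 * lam * cos (π * x) + lam ^ 2)) x := by
  have hD := one_sub_two_mul_cos_add_sq_pos hlam (π * x)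
  have harctan := (hasDerivAt_arctan_mul_sin_div (one_sub_mul_cos_pos hlam (π * x)).ne').comp x
    ((hasDerivAt_id x).const_mul π)
  refine ((((hasDerivAt_id x).const_mul 2).add_const 1).add
    (harctan.const_mul (2 / π))).congr_deriv ?_
  field_simp
  ring

lemma abs_sub_le (lam x : ℝ) : |liftMap lam x - (2 * x + 1)| ≤ 1 := by
  have h := abs_arctan_lt_pi_div_two (lam * sin (π * x) / (1 - lam * cos (π * x)))
  rw [liftMap, add_sub_cancel_left, abs_mul, abs_of_pos (by positivity : (0 : ℝ) < 2 / π)]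
  calc 2 / π * |arctan _| ≤ 2 / π * (π / 2) := by gcongr
    _ = 1 := by field_simp

end liftMap

/-- For λ ∈ (−1,1), the map F(x) = 2x + 1 + (2/π)·arctan(λ·sin(πx)/(1 − λ·cos(πx))) is
differentiable at every x with F'(x) = 2·(1 − λ·cos(πx))/(1 − 2λ·cos(πx) + λ²) > 1; in
particular F is a strictly increasing diffeomorphism of ℝ (strictly monotone and
bijective) with derivative bounded below by a constant greater than 1. -/
theorem lift_expanding (lam : ℝ) (hlam : lam ∈ Set.Ioo (-1 : ℝ) 1) :
    (∀ x : ℝ,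
      HasDerivAt (fun y : ℝ => 2 * y + 1 + (2 / Real.pi) *
          Real.arctan (lam * Real.sin (Real.pi * y) / (1 - lam * Real.cos (Real.pi * y))))
        (2 * (1 - lam * Real.cos (Real.pi * x)) /
          (1 - 2 * lam * Real.cos (Real.pi * x) + lam ^ 2)) x ∧
      1 < 2 * (1 - lam * Real.cos (Real.pi * x)) /
          (1 - 2 * lam * Real.cos (Real.pi * x) + lam ^ 2)) ∧
    StrictMono (fun y : ℝ => 2 * y + 1 + (2 / Real.pi) *
        Real.arctan (lam * Real.sin (Real.pi * y) / (1 - lam * Real.cos (Real.pi * y)))) ∧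
    Function.Bijective (fun y : ℝ => 2 * y + 1 + (2 / Real.pi) *
        Real.arctan (lam * Real.sin (Real.pi * y) / (1 - lam * Real.cos (Real.pi * y)))) ∧
    ∃ c : ℝ, 1 < c ∧ ∀ x : ℝ,
      c ≤ 2 * (1 - lam * Real.cos (Real.pi * x)) /
          (1 - 2 * lam * Real.cos (Real.pi * x) + lam ^ 2) := by
  have habs : |lam| < 1 := abs_lt.2 hlam
  have hderiv := liftMap.hasDerivAt habs
  have hbound := fun x => two_div_one_add_abs_le habs (π * x)
  have hc := one_lt_two_div_one_add_abs habs
  have hmono : StrictMono (liftMap lam) :=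
    strictMono_of_hasDerivAt_pos hderiv fun x => one_pos.trans (hc.trans_le (hbound x))
  have hcont : Continuous (liftMap lam) :=
    continuous_iff_continuousAt.2 fun x => (hderiv x).continuousAt
  exact ⟨fun x => ⟨hderiv x, hc.trans_le (hbound x)⟩, hmono,
    ⟨hmono.injective, hcont.surjective_of_abs_sub_affine_le two_pos (liftMap.abs_sub_le lam)⟩,
    _, hc, hbound⟩
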